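/- For every (k,n) ∈ I and all z, w in the closed unit disk 𝔻, |φ'_{k,n}(z)| ≤ K₁·|φ'_{k,n}(w)|, where K₁ is the explicit constant K₁ = [ (√((1/2+(1+λ)(λ+1))² + 3/4) + √(((3−λ)/2+λ)² + (3/4)(λ−1)²)) / (√((1/2+(1+λ)(λ+1))² + 3/4) − √(((3−λ)/2+λ)² + (3/4)(λ−1)²)) ]² with λ = √3 (numerically K₁ ≈ 3.53765052763825). -/

import Mathlib

/-!
In the coordinate `1 / (u - 1)` the parabolic map `f` is a translation, which gives a closed
form of `f^n`. With `ω = e^{iθ_k}` a primitive cube root of unity, this yields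
`|φ'_{k,n}(z)| = 9 / |c - b z|²` with `c = (λ + n)(λ + 1) - n ω` and `b = λ + n + n (λ - 1) ω`.
On the disk `|c - b z|` lies between `|c| - |b|` and `|c| + |b|`, so the distortion is at most
`((|c| + |b|) / (|c| - |b|))²`. This bound increases with `|b| / |c|`, which is largest at
`n = 1`, and `K₁` is its value there.
-/

open Complex Metric Set
open scoped ENNReal

noncomputable section

/-- λ = √3 -/
def lam : ℝ := Real.sqrt 3

/-- The Möbius map f(z) = ((λ−1)z+1)/(−z+λ+1). -/
def apolF : ℂ → ℂ := fun z => (((lam : ℂ) - 1) * z + 1) / (-z + (lam : ℂ) + 1)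

/-- Rotation by angle θ. -/
def Rot (θ : ℝ) : ℂ → ℂ := fun z => Complex.exp ((θ : ℂ) * Complex.I) * z

/-- θ_k = (−1)^k · 2π/3 -/
def thetaA (k : ℕ) : ℝ := (-1 : ℝ) ^ k * (2 * Real.pi / 3)

/-- θ'_k = 2πk/3 -/
def thetaB (k : ℕ) : ℝ := 2 * Real.pi * k / 3

/-- The Apollonian generators φ_{k,n} = R_{θ'_k} ∘ f^n ∘ R_{θ_k} ∘ f. -/
def phi (k n : ℕ) : ℂ → ℂ := Rot (thetaB k) ∘ (apolF^[n]) ∘ Rot (thetaA k) ∘ apolF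

/-- The closed unit disk 𝔻. -/
def unitD : Set ℂ := Metric.closedBall (0 : ℂ) 1

/-- The explicit distortion constant K₁ ≈ 3.53765052763825. -/
def K1 : ℝ :=
  ((Real.sqrt ((1 / 2 + (1 + lam) * (lam + 1)) ^ 2 + 3 / 4) +
      Real.sqrt (((3 - lam) / 2 + lam) ^ 2 + 3 / 4 * (lam - 1) ^ 2)) /
    (Real.sqrt ((1 / 2 + (1 + lam) * (lam + 1)) ^ 2 + 3 / 4) -
      Real.sqrt (((3 - lam) / 2 + lam) ^ 2 + 3 / 4 * (lam - 1) ^ 2))) ^ 2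

theorem sub_mul_norm_sub_mul_le {R : Type*} [SeminormedRing R] {B C : ℝ} (hB : 0 ≤ B)
    (hBC : B ≤ C) {b c z w : R} (hbc : C * ‖b‖ ≤ B * ‖c‖) (hz : ‖z‖ ≤ 1) (hw : ‖w‖ ≤ 1) :
    (C - B) * ‖c - b * w‖ ≤ (C + B) * ‖c - b * z‖ := by
  have hbw : ‖b * w‖ ≤ ‖b‖ := (norm_mul_le b w).trans (mul_le_of_le_one_right (norm_nonneg b) hw)
  have hbz : ‖b * z‖ ≤ ‖b‖ := (norm_mul_le b z).trans (mul_le_of_le_one_right (norm_nonneg b) hz)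
  have hw' : ‖c - b * w‖ ≤ ‖c‖ + ‖b‖ := by linarith [norm_sub_le c (b * w)]
  have hz' : ‖c‖ - ‖b‖ ≤ ‖c - b * z‖ := by linarith [norm_sub_norm_le c (b * z)]
  calc (C - B) * ‖c - b * w‖ ≤ (C - B) * (‖c‖ + ‖b‖) :=
        mul_le_mul_of_nonneg_left hw' (sub_nonneg.mpr hBC)
    _ ≤ (C + B) * (‖c‖ - ‖b‖) := by linarith
    _ ≤ (C + B) * ‖c - b * z‖ := mul_le_mul_of_nonneg_left hz' (by linarith)

lemma div_sq_le_div_sq_mul_div_sq {a p q x y : ℝ} (hq : 0 < q) (hx : 0 < x) (hy : 0 < y)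
    (h : q * x ≤ p * y) : (a / y) ^ 2 ≤ (p / q) ^ 2 * (a / x) ^ 2 := by
  rw [div_pow a y, ← mul_pow, div_mul_div_comm, div_pow, div_le_div_iff₀ (by positivity)
    (by positivity)]
  have : (q * x) ^ 2 ≤ (p * y) ^ 2 := pow_le_pow_left₀ (by positivity) h 2
  nlinarith [mul_le_mul_of_nonneg_left this (sq_nonneg a)]

lemma lam_pos : 0 < lam := Real.sqrt_pos.mpr (by norm_num)

lemma lam_sq : lam ^ 2 = 3 := Real.sq_sqrt (by norm_num)

lemma ofReal_lam_ne_zero : (lam : ℂ) ≠ 0 := ofReal_ne_zero.mpr lam_pos.ne'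

lemma hasDerivAt_Rot (θ : ℝ) (z : ℂ) : HasDerivAt (Rot θ) (exp (θ * I)) z :=
  hasDerivAt_const_mul _

lemma apolF_den_ne_zero {z : ℂ} (hz : z.re ≤ 1) : -z + (lam : ℂ) + 1 ≠ 0 := by
  intro h
  have := congrArg re h
  simp only [add_re, neg_re, ofReal_re, one_re, zero_re] at this
  linarith [lam_pos]

lemma hasDerivAt_apolF {z : ℂ} (hz : -z + (lam : ℂ) + 1 ≠ 0) :
    HasDerivAt apolF ((lam / (-z + lam + 1)) ^ 2) z := by
  have hnum : HasDerivAt (fun z : ℂ => ((lam : ℂ) - 1) * z + 1) ((lam : ℂ) - 1) z := by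
    simpa using ((hasDerivAt_id z).const_mul ((lam : ℂ) - 1)).add_const 1
  have hden : HasDerivAt (fun z : ℂ => -z + (lam : ℂ) + 1) (-1) z := by
    simpa using ((hasDerivAt_id z).neg.add_const (lam : ℂ)).add_const 1
  refine (hnum.div hden hz).congr_deriv ?_
  rw [div_pow]
  ring

lemma norm_apolF_le_one {z : ℂ} (hz : ‖z‖ ≤ 1) : ‖apolF z‖ ≤ 1 := by
  have hden := apolF_den_ne_zero ((re_le_norm z).trans hz)
  rw [apolF, norm_div, div_le_one (norm_pos_iff.mpr hden)]
  -- with `r = ‖z‖`, `‖den‖² - ‖num‖² ≥ (1 - r) (3 + 2λ - (2λ - 3) r)`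
  have hr : 0 ≤ (1 - ‖z‖) * (3 + 2 * lam - (2 * lam - 3) * ‖z‖) :=
    mul_nonneg (by linarith) (by nlinarith [norm_nonneg z, lam_pos])
  have hsq : ‖z‖ ^ 2 = z.re ^ 2 + z.im ^ 2 := by rw [Complex.sq_norm, normSq_apply]; ring
  have hre := re_le_norm z
  refine pow_le_pow_iff_left₀ (norm_nonneg _) (norm_nonneg _) two_ne_zero |>.mp ?_
  rw [Complex.sq_norm, Complex.sq_norm, normSq_apply, normSq_apply]
  simp only [add_re, add_im, mul_re, mul_im, sub_re, sub_im, neg_re, neg_im, ofReal_re,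
    ofReal_im, one_re, one_im]
  nlinarith [lam_sq, lam_pos]

def rotA (k : ℕ) : ℂ := exp (thetaA k * I)

lemma norm_rotA (k : ℕ) : ‖rotA k‖ = 1 := norm_exp_ofReal_mul_I _

lemma rotA_re (k : ℕ) : (rotA k).re = -1 / 2 := by
  have hcos : Real.cos (2 * Real.pi / 3) = -1 / 2 := by
    rw [show 2 * Real.pi / 3 = Real.pi - Real.pi / 3 by ring, Real.cos_pi_sub,
      Real.cos_pi_div_three]
    norm_num
  rw [rotA, exp_ofReal_mul_I_re, thetaA]
  rcases Nat.even_or_odd k with h | h <;> simp [h.neg_one_pow, hcos]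

lemma sq_norm_ofReal_add_mul {ω : ℂ} (hre : ω.re = -1 / 2) (hnorm : ‖ω‖ = 1) (a b : ℝ) :
    ‖(a : ℂ) + b * ω‖ ^ 2 = a ^ 2 - a * b + b ^ 2 := by
  have hω : ω.im ^ 2 = 3 / 4 := by rw [← sq_norm_sub_sq_re, hnorm, hre]; norm_num
  rw [Complex.sq_norm, normSq_apply]
  simp only [add_re, add_im, mul_re, mul_im, ofReal_re, ofReal_im, hre]
  linear_combination b ^ 2 * hω

def iterDen (m : ℕ) (u : ℂ) : ℂ := lam + m * (1 - u)

/-- `apolF` is parabolic with fixed point `1`: in the coordinate `1 / (u - 1)` it is the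
translation by `-1 / λ`, which gives this closed form of `apolF^[m]`. -/
def apolIter (m : ℕ) (u : ℂ) : ℂ := 1 + lam * (u - 1) / iterDen m u

lemma iterDen_ne_zero {u : ℂ} (hu : u.re ≤ 1) (m : ℕ) : iterDen m u ≠ 0 := by
  intro h
  have := congrArg re h
  simp only [iterDen, add_re, mul_re, sub_re, ofReal_re, natCast_re, natCast_im, one_re,
    zero_mul, sub_zero, zero_re] at this
  nlinarith [lam_pos, (Nat.cast_nonneg m : (0 : ℝ) ≤ m)]

lemma apolF_den_apolIter {m : ℕ} {u : ℂ} (h : iterDen m u ≠ 0) :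
    -apolIter m u + lam + 1 = lam * iterDen (m + 1) u / iterDen m u := by
  rw [apolIter, eq_div_iff h]
  field_simp
  simp only [iterDen]
  push_cast
  ring

lemma apolF_apolIter {m : ℕ} {u : ℂ} (h : iterDen m u ≠ 0) (h' : iterDen (m + 1) u ≠ 0) :
    apolF (apolIter m u) = apolIter (m + 1) u := by
  have hlam := ofReal_lam_ne_zero
  rw [apolF, apolF_den_apolIter h, apolIter, apolIter]
  field_simp
  simp only [iterDen]
  push_cast
  ring

lemma apolF_iterate {u : ℂ} (hu : u.re ≤ 1) (m : ℕ) : apolF^[m] u = apolIter m u := by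
  induction m with
  | zero =>
    rw [Function.iterate_zero_apply, apolIter, iterDen, Nat.cast_zero, zero_mul, add_zero,
      mul_div_cancel_left₀ _ ofReal_lam_ne_zero]
    ring
  | succ m ih =>
    rw [Function.iterate_succ_apply', ih,
      apolF_apolIter (iterDen_ne_zero hu m) (iterDen_ne_zero hu (m + 1))]

lemma hasDerivAt_apolF_iterate {u : ℂ} (hu : u.re ≤ 1) (m : ℕ) :
    HasDerivAt apolF^[m] ((lam / iterDen m u) ^ 2) u := by
  induction m with
  | zero =>
    rw [iterDen, Nat.cast_zero, zero_mul, add_zero, div_self ofReal_lam_ne_zero, one_pow]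
    exact hasDerivAt_id u
  | succ m ih =>
    have hD := iterDen_ne_zero hu m
    have hD' := iterDen_ne_zero hu (m + 1)
    have hden : -apolF^[m] u + lam + 1 ≠ 0 := by
      rw [apolF_iterate hu, apolF_den_apolIter hD]
      exact div_ne_zero (mul_ne_zero ofReal_lam_ne_zero hD') hD
    rw [Function.iterate_succ']
    refine ((hasDerivAt_apolF hden).comp u ih).congr_deriv ?_
    rw [apolF_iterate hu, apolF_den_apolIter hD]
    field_simp

def phiC (k n : ℕ) : ℂ := (lam + n) * (lam + 1) - n * rotA k

def phiB (k n : ℕ) : ℂ := (lam + n) + n * (lam - 1) * rotA k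

lemma iterDen_mul_apolF_den {z : ℂ} (hz : -z + (lam : ℂ) + 1 ≠ 0) (k n : ℕ) :
    iterDen n (rotA k * apolF z) * (-z + lam + 1) = phiC k n - phiB k n * z := by
  rw [iterDen, apolF, phiC, phiB]
  field_simp
  ring

lemma re_rotA_mul_apolF_le_one {z : ℂ} (hz : ‖z‖ ≤ 1) (k : ℕ) : (rotA k * apolF z).re ≤ 1 := by
  refine (re_le_norm _).trans ?_
  rw [norm_mul, norm_rotA, one_mul]
  exact norm_apolF_le_one hz

lemma phiC_sub_phiB_mul_ne_zero {z : ℂ} (hz : ‖z‖ ≤ 1) (k n : ℕ) :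
    phiC k n - phiB k n * z ≠ 0 := by
  have hden := apolF_den_ne_zero ((re_le_norm z).trans hz)
  have hu := re_rotA_mul_apolF_le_one hz k
  rw [← iterDen_mul_apolF_den hden]
  exact mul_ne_zero (iterDen_ne_zero hu n) hden

lemma norm_deriv_phi {z : ℂ} (hz : ‖z‖ ≤ 1) (k n : ℕ) :
    ‖deriv (phi k n) z‖ = (3 / ‖phiC k n - phiB k n * z‖) ^ 2 := by
  have hden := apolF_den_ne_zero ((re_le_norm z).trans hz)
  have hu := re_rotA_mul_apolF_le_one hz k
  have hphi : HasDerivAt (phi k n) (exp (thetaB k * I) *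
      ((lam / iterDen n (rotA k * apolF z)) ^ 2 * (rotA k * (lam / (-z + lam + 1)) ^ 2))) z :=
    (hasDerivAt_Rot _ _).comp z <| (hasDerivAt_apolF_iterate hu n).comp z <|
      (hasDerivAt_Rot _ _).comp z (hasDerivAt_apolF hden)
  rw [hphi.deriv, ← iterDen_mul_apolF_den hden]
  simp only [norm_mul, norm_div, norm_pow, norm_exp_ofReal_mul_I, norm_rotA, norm_real,
    Real.norm_of_nonneg lam_pos.le]
  field_simp
  rw [← lam_sq]
  ring

lemma sq_norm_phiC (k n : ℕ) :
    ‖phiC k n‖ ^ 2 = ((lam + n) * (lam + 1)) ^ 2 + (lam + n) * (lam + 1) * n + n ^ 2 := by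
  have hC : phiC k n = (((lam + n) * (lam + 1) : ℝ) : ℂ) + ((-n : ℝ) : ℂ) * rotA k := by
    rw [phiC]
    push_cast
    ring
  rw [hC, sq_norm_ofReal_add_mul (rotA_re k) (norm_rotA k)]
  ring

lemma sq_norm_phiB (k n : ℕ) :
    ‖phiB k n‖ ^ 2 = (lam + n) ^ 2 - (lam + n) * (n * (lam - 1)) + (n * (lam - 1)) ^ 2 := by
  rw [phiB, ← sq_norm_ofReal_add_mul (rotA_re k) (norm_rotA k)]
  push_cast
  ring_nf

lemma sq_norm_phiC_one (k : ℕ) : ‖phiC k 1‖ ^ 2 = 33 + 18 * lam := by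
  rw [sq_norm_phiC]
  push_cast
  linear_combination (lam ^ 2 + 4 * lam + 10) * lam_sq

lemma sq_norm_phiB_one (k : ℕ) : ‖phiB k 1‖ ^ 2 = 6 := by
  rw [sq_norm_phiB]
  push_cast
  linear_combination lam_sq

lemma norm_phiB_one_lt_norm_phiC_one (k : ℕ) : ‖phiB k 1‖ < ‖phiC k 1‖ := by
  refine (pow_lt_pow_iff_left₀ (norm_nonneg _) (norm_nonneg _) two_ne_zero).mp ?_
  rw [sq_norm_phiB_one, sq_norm_phiC_one]
  linarith [lam_pos]

lemma K1_eq (k : ℕ) :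
    K1 = ((‖phiC k 1‖ + ‖phiB k 1‖) / (‖phiC k 1‖ - ‖phiB k 1‖)) ^ 2 := by
  have hC : ‖phiC k 1‖ = √((1 / 2 + (1 + lam) * (lam + 1)) ^ 2 + 3 / 4) := by
    rw [← Real.sqrt_sq (norm_nonneg _), sq_norm_phiC]
    push_cast
    ring_nf
  have hB : ‖phiB k 1‖ = √(((3 - lam) / 2 + lam) ^ 2 + 3 / 4 * (lam - 1) ^ 2) := by
    rw [← Real.sqrt_sq (norm_nonneg _), sq_norm_phiB]
    push_cast
    ring_nf
  rw [hC, hB, K1]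

lemma norm_phiC_one_mul_norm_phiB_le (k : ℕ) {n : ℕ} (hn : 1 ≤ n) :
    ‖phiC k 1‖ * ‖phiB k n‖ ≤ ‖phiB k 1‖ * ‖phiC k n‖ := by
  refine (pow_le_pow_iff_left₀ (by positivity) (by positivity) two_ne_zero).mp ?_
  rw [mul_pow, mul_pow, sq_norm_phiC_one, sq_norm_phiB_one, sq_norm_phiC, sq_norm_phiB]
  have hn' : (1 : ℝ) ≤ n := by exact_mod_cast hn
  have hgap : 0 ≤ 9 * ((n : ℝ) - 1) * (lam * (n + 2) + 3) := by
    have := lam_pos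
    positivity
  -- modulo `λ ^ 2 = 3`, the difference of the two sides is exactly `hgap`'s right-hand side
  linear_combination hgap - (6 * lam ^ 2 - 18 * lam * n ^ 2 + 30 * lam * n - 6 * lam
    + 27 * n ^ 2 + 9 * n - 9) * lam_sq

theorem apollonian_generator_distortion_general (k n : ℕ)
    (hn : 1 ≤ n) (z w : ℂ) (hz : z ∈ unitD) (hw : w ∈ unitD) :
    ‖deriv (phi k n) z‖ ≤ K1 * ‖deriv (phi k n) w‖ := by
  rw [unitD, mem_closedBall_zero_iff] at hz hw
  rw [norm_deriv_phi hz, norm_deriv_phi hw, K1_eq k]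
  have hB1C1 := norm_phiB_one_lt_norm_phiC_one k
  have hlin := sub_mul_norm_sub_mul_le (norm_nonneg _) hB1C1.le
    (norm_phiC_one_mul_norm_phiB_le k hn) hz hw
  exact div_sq_le_div_sq_mul_div_sq (sub_pos.mpr hB1C1)
    (norm_pos_iff.mpr (phiC_sub_phiB_mul_ne_zero hw k n))
    (norm_pos_iff.mpr (phiC_sub_phiB_mul_ne_zero hz k n)) hlin

/-- For every (k,n) ∈ I and z, w ∈ 𝔻, |φ'_{k,n}(z)| ≤ K₁ · |φ'_{k,n}(w)|. -/
theorem apollonian_generator_distortion (k n : ℕ) (hk1 : 1 ≤ k) (hk6 : k ≤ 6)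
    (hn : 1 ≤ n) (z w : ℂ) (hz : z ∈ unitD) (hw : w ∈ unitD) :
    ‖deriv (phi k n) z‖ ≤ K1 * ‖deriv (phi k n) w‖ :=
  apollonian_generator_distortion_general k n hn z w hz hw

end
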